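/- For n ≥ 1, define for 1 ≤ i ≤ ⌊n/2⌋ the n-fold Pauli tensor words X̂ᵢ (with X in position 2i and I elsewhere) and Ŷᵢ (with Y in positions 2i-1 and 2i and I elsewhere). Then every nontrivial product of elements from {X̂ᵢ, Ŷⱼ} is a Pauli word that is not diagonal; consequently, the unital algebra ℬ generated by {X̂ᵢ, Ŷⱼ : 1 ≤ i,j ≤ ⌊n/2⌋} is quasiorthogonal to the diagonal algebra Δ_{2ⁿ} in M_{2ⁿ}(ℂ). -/
import Mathlib


open Matrix Complex

noncomputable def pauli : Fin 4 → Matrix (Fin 2) (Fin 2) ℂ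
  | 0 => 1
  | 1 => !![0, 1; 1, 0]
  | 2 => !![0, -I; I, 0]
  | 3 => !![1, 0; 0, -1]

noncomputable def pauliWord {n : ℕ} (f : Fin n → Fin 4) :
    Matrix (Fin n → Fin 2) (Fin n → Fin 2) ℂ :=
  Matrix.of fun i j => ∏ k, pauli (f k) (i k) (j k)

/-- `X̂ᵢ`: the Pauli word with `X` in position `2i` (1-indexed) and `I` elsewhere. -/
noncomputable def Xhat {n : ℕ} (i : Fin (n / 2)) :
    Matrix (Fin n → Fin 2) (Fin n → Fin 2) ℂ :=
  pauliWord (fun k => if (k : ℕ) = 2 * (i : ℕ) + 1 then 1 else 0)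

/-- `Ŷᵢ`: the Pauli word with `Y` in positions `2i-1` and `2i` (1-indexed) and `I` elsewhere. -/
noncomputable def Yhat {n : ℕ} (i : Fin (n / 2)) :
    Matrix (Fin n → Fin 2) (Fin n → Fin 2) ℂ :=
  pauliWord (fun k => if (k : ℕ) = 2 * (i : ℕ) ∨ (k : ℕ) = 2 * (i : ℕ) + 1 then 2 else 0)

def tbl : Fin 4 → Fin 4 → Fin 4 :=
  ![![0,1,2,3], ![1,0,3,2], ![2,3,0,1], ![3,2,1,0]]

noncomputable def ph : Fin 4 → Fin 4 → ℂ :=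
  ![![1,1,1,1], ![1,1,I,-I], ![1,-I,1,I], ![1,I,-I,1]]

set_option linter.unreachableTactic false
set_option linter.unusedTactic false

lemma pauli_mul (a b : Fin 4) : pauli a * pauli b = ph a b • pauli (tbl a b) := by
  fin_cases a <;> fin_cases b <;>
    · ext i j
      fin_cases i <;> fin_cases j <;>
        simp [pauli, ph, tbl, Matrix.mul_apply, Fin.sum_univ_two, Matrix.one_apply,
          Matrix.vecHead, Matrix.vecTail] <;>
        ring_nf <;> simp [Complex.I_sq]

def unit4 (c : ℂ) : Prop := c = 1 ∨ c = -1 ∨ c = I ∨ c = -I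

lemma unit4_one : unit4 1 := Or.inl rfl

lemma unit4_mul {c d : ℂ} (hc : unit4 c) (hd : unit4 d) : unit4 (c * d) := by
  unfold unit4 at *
  rcases hc with rfl|rfl|rfl|rfl <;> rcases hd with rfl|rfl|rfl|rfl <;>
    simp [Complex.I_mul_I]

lemma unit4_ph (a b : Fin 4) : unit4 (ph a b) := by
  fin_cases a <;> fin_cases b <;> simp [ph, unit4, Matrix.vecHead, Matrix.vecTail]

lemma unit4_ne_zero {c : ℂ} (hc : unit4 c) : c ≠ 0 := by
  rcases hc with rfl|rfl|rfl|rfl <;> simp [Complex.I_ne_zero]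

lemma pauliWord_mul {n : ℕ} (f g : Fin n → Fin 4) :
    pauliWord f * pauliWord g =
      (∏ k, ph (f k) (g k)) • pauliWord fun k => tbl (f k) (g k) := by
  ext i j
  rw [Matrix.mul_apply]
  have h1 : ∀ x : Fin n → Fin 2, pauliWord f i x * pauliWord g x j
      = ∏ k, (pauli (f k) (i k) (x k) * pauli (g k) (x k) (j k)) := by
    intro x; simp [pauliWord, Finset.prod_mul_distrib]
  simp_rw [h1]
  rw [← Fintype.prod_sum (fun k a => pauli (f k) (i k) a * pauli (g k) a (j k))]
  have h2 : ∀ k : Fin n, (∑ a, pauli (f k) (i k) a * pauli (g k) a (j k))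
      = ph (f k) (g k) * pauli (tbl (f k) (g k)) (i k) (j k) := by
    intro k
    have h3 : (∑ a, pauli (f k) (i k) a * pauli (g k) a (j k))
        = (pauli (f k) * pauli (g k)) (i k) (j k) := (Matrix.mul_apply).symm
    rw [h3, pauli_mul]
    simp
  simp_rw [h2]
  rw [Finset.prod_mul_distrib]
  simp [pauliWord]

lemma pauliWord_zero {n : ℕ} : pauliWord (fun _ : Fin n => (0 : Fin 4)) = 1 := by
  ext i j
  simp only [pauliWord, Matrix.of_apply, pauli, Matrix.one_apply]
  by_cases h : i = j
  · subst h; simp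
  · obtain ⟨k, hk⟩ := Function.ne_iff.mp h
    rw [if_neg h]
    exact Finset.prod_eq_zero (Finset.mem_univ k) (by simp [Matrix.one_apply, hk])


def Blk (a b : Fin 4) : Prop :=
  (a = 0 ∧ b = 0) ∨ (a = 0 ∧ b = 1) ∨ (a = 2 ∧ b = 2) ∨ (a = 2 ∧ b = 3)

instance (a b : Fin 4) : Decidable (Blk a b) := by unfold Blk; infer_instance

lemma Blk_tbl {a b a' b' : Fin 4} (h : Blk a b) (h' : Blk a' b') :
    Blk (tbl a a') (tbl b b') := by
  revert h h'
  revert a b a' b'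
  decide

/-- The positional invariant on Pauli-word exponent vectors. -/
def okf {n : ℕ} (f : Fin n → Fin 4) : Prop :=
  (∀ (i : ℕ) (h : 2 * i + 1 < n), Blk (f ⟨2 * i, by omega⟩) (f ⟨2 * i + 1, h⟩)) ∧
  (∀ k : Fin n, ¬ ((k : ℕ) < 2 * (n / 2)) → f k = 0)

lemma okf_zero {n : ℕ} : okf (fun _ : Fin n => (0 : Fin 4)) :=
  ⟨fun _ _ => Or.inl ⟨rfl, rfl⟩, fun _ _ => rfl⟩

lemma okf_tbl {n : ℕ} {f g : Fin n → Fin 4} (hf : okf f) (hg : okf g) :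
    okf (fun k => tbl (f k) (g k)) := by
  refine ⟨fun i h => Blk_tbl (hf.1 i h) (hg.1 i h), fun k hk => ?_⟩
  show tbl (f k) (g k) = 0
  rw [hf.2 k hk, hg.2 k hk]; rfl

/-- If `f` satisfies `okf` and is nonzero, then some position holds `X` or `Y`. -/
lemma okf_exists {n : ℕ} {f : Fin n → Fin 4} (hf : okf f) (h : f ≠ fun _ => 0) :
    ∃ k, f k = 1 ∨ f k = 2 := by
  obtain ⟨k, hk⟩ := Function.ne_iff.mp h
  have hlt : (k : ℕ) < 2 * (n / 2) := by
    by_contra hc; exact hk (hf.2 k hc)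
  have h1 : 2 * ((k : ℕ) / 2) + 1 < n := by omega
  have h0 : 2 * ((k : ℕ) / 2) < n := by omega
  have hb := hf.1 ((k : ℕ) / 2) h1
  have hab : f k = f ⟨2 * ((k : ℕ) / 2), h0⟩ ∨ f k = f ⟨2 * ((k : ℕ) / 2) + 1, h1⟩ := by
    have hk' : (k : ℕ) = 2 * ((k : ℕ) / 2) ∨ (k : ℕ) = 2 * ((k : ℕ) / 2) + 1 := by omega
    rcases hk' with h'|h'
    · left; congr 1; exact Fin.ext h'
    · right; congr 1; exact Fin.ext h'
  rcases hb with ⟨h2, h3⟩|⟨h2, h3⟩|⟨h2, h3⟩|⟨h2, h3⟩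
  · exfalso; rcases hab with h4|h4
    · exact hk (h4.trans h2)
    · exact hk (h4.trans h3)
  · exact ⟨_, Or.inl h3⟩
  · exact ⟨_, Or.inr h2⟩
  · exact ⟨_, Or.inr h2⟩

lemma pauli_entry (a : Fin 4) (x y : Fin 2) :
    ∃ r : ℝ, pauli a x y = (if a = 2 then I else 1) * (r : ℂ) :=
  match a, x, y with
    | 0, 0, 0 => ⟨1, by norm_num [pauli, Matrix.one_apply, Matrix.vecHead, Matrix.vecTail, Fin.ext_iff]; try rw [if_neg (by decide)]⟩
    | 0, 0, 1 => ⟨0, by norm_num [pauli, Matrix.one_apply, Matrix.vecHead, Matrix.vecTail, Fin.ext_iff]; try rw [if_neg (by decide)]⟩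
    | 0, 1, 0 => ⟨0, by norm_num [pauli, Matrix.one_apply, Matrix.vecHead, Matrix.vecTail, Fin.ext_iff]; try rw [if_neg (by decide)]⟩
    | 0, 1, 1 => ⟨1, by norm_num [pauli, Matrix.one_apply, Matrix.vecHead, Matrix.vecTail, Fin.ext_iff]; try rw [if_neg (by decide)]⟩
    | 1, 0, 0 => ⟨0, by norm_num [pauli, Matrix.one_apply, Matrix.vecHead, Matrix.vecTail, Fin.ext_iff]; try rw [if_neg (by decide)]⟩
    | 1, 0, 1 => ⟨1, by norm_num [pauli, Matrix.one_apply, Matrix.vecHead, Matrix.vecTail, Fin.ext_iff]; try rw [if_neg (by decide)]⟩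
    | 1, 1, 0 => ⟨1, by norm_num [pauli, Matrix.one_apply, Matrix.vecHead, Matrix.vecTail, Fin.ext_iff]; try rw [if_neg (by decide)]⟩
    | 1, 1, 1 => ⟨0, by norm_num [pauli, Matrix.one_apply, Matrix.vecHead, Matrix.vecTail, Fin.ext_iff]; try rw [if_neg (by decide)]⟩
    | 2, 0, 0 => ⟨0, by norm_num [pauli, Matrix.one_apply, Matrix.vecHead, Matrix.vecTail, Fin.ext_iff]; try rw [if_neg (by decide)]⟩
    | 2, 0, 1 => ⟨-1, by norm_num [pauli, Matrix.one_apply, Matrix.vecHead, Matrix.vecTail, Fin.ext_iff]; try rw [if_neg (by decide)]⟩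
    | 2, 1, 0 => ⟨1, by norm_num [pauli, Matrix.one_apply, Matrix.vecHead, Matrix.vecTail, Fin.ext_iff]; try rw [if_neg (by decide)]⟩
    | 2, 1, 1 => ⟨0, by norm_num [pauli, Matrix.one_apply, Matrix.vecHead, Matrix.vecTail, Fin.ext_iff]; try rw [if_neg (by decide)]⟩
    | 3, 0, 0 => ⟨1, by norm_num [pauli, Matrix.one_apply, Matrix.vecHead, Matrix.vecTail, Fin.ext_iff]; try rw [if_neg (by decide)]⟩
    | 3, 0, 1 => ⟨0, by norm_num [pauli, Matrix.one_apply, Matrix.vecHead, Matrix.vecTail, Fin.ext_iff]; try rw [if_neg (by decide)]⟩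
    | 3, 1, 0 => ⟨0, by norm_num [pauli, Matrix.one_apply, Matrix.vecHead, Matrix.vecTail, Fin.ext_iff]; try rw [if_neg (by decide)]⟩
    | 3, 1, 1 => ⟨-1, by norm_num [pauli, Matrix.one_apply, Matrix.vecHead, Matrix.vecTail, Fin.ext_iff]; try rw [if_neg (by decide)]⟩

lemma pauliWord_entry {n : ℕ} (f : Fin n → Fin 4) (x y : Fin n → Fin 2) :
    ∃ r : ℝ, pauliWord f x y
      = I ^ (Finset.univ.filter fun k => f k = 2).card * (r : ℂ) := by
  choose r hr using fun k => pauli_entry (f k) (x k) (y k)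
  refine ⟨∏ k, r k, ?_⟩
  show (∏ k, pauli (f k) (x k) (y k)) = _
  simp_rw [hr]
  rw [Finset.prod_mul_distrib, Finset.prod_ite, Finset.prod_const, Finset.prod_const_one,
    mul_one]
  push_cast
  rfl

/-- Real matrices. -/
def RealMat {n : ℕ} (m : Matrix (Fin n → Fin 2) (Fin n → Fin 2) ℂ) : Prop :=
  ∀ i j, (m i j).im = 0

lemma RealMat.mul {n : ℕ} {m m' : Matrix (Fin n → Fin 2) (Fin n → Fin 2) ℂ}
    (h : RealMat m) (h' : RealMat m') : RealMat (m * m') := by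
  intro i j
  rw [Matrix.mul_apply, Complex.im_sum]
  refine Finset.sum_eq_zero fun x _ => ?_
  rw [Complex.mul_im, h i x, h' x j]
  ring

lemma RealMat.one {n : ℕ} : RealMat (1 : Matrix (Fin n → Fin 2) (Fin n → Fin 2) ℂ) := by
  intro i j
  rw [Matrix.one_apply]
  split <;> simp

/-- Diagonal entries of a Pauli word containing an `X` or `Y` vanish. -/
lemma pauliWord_diag_zero {n : ℕ} {f : Fin n → Fin 4} {k : Fin n}
    (hk : f k = 1 ∨ f k = 2) (i : Fin n → Fin 2) : pauliWord f i i = 0 := by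
  refine Finset.prod_eq_zero (Finset.mem_univ k) ?_
  have hgen : ∀ (a : Fin 4), a = 1 ∨ a = 2 → ∀ x : Fin 2, pauli a x x = 0 := by
    intro a ha x
    rcases ha with rfl|rfl <;> fin_cases x <;> simp [pauli]
  exact hgen (f k) hk (i k)

lemma RealMat_pauliWord {n : ℕ} {f : Fin n → Fin 4}
    (h : Even (Finset.univ.filter fun k => f k = 2).card) : RealMat (pauliWord f) := by
  intro x y
  obtain ⟨r, hr⟩ := pauliWord_entry f x y
  obtain ⟨t, ht⟩ := h
  rw [hr, ht]
  have h2 : (I : ℂ) ^ (t + t) = (((-1 : ℝ) ^ t : ℝ) : ℂ) := by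
    rw [← two_mul, pow_mul, Complex.I_sq]
    push_cast
    ring
  rw [h2, ← Complex.ofReal_mul, Complex.ofReal_im]

lemma okf_X {n : ℕ} (i : Fin (n / 2)) :
    okf (fun k : Fin n => if (k : ℕ) = 2 * (i : ℕ) + 1 then (1 : Fin 4) else 0) := by
  have hi := i.isLt
  constructor
  · intro j hj
    simp only
    rw [if_neg (by omega)]
    by_cases h' : 2 * j + 1 = 2 * (i : ℕ) + 1
    · rw [if_pos h']; exact Or.inr (Or.inl ⟨rfl, rfl⟩)
    · rw [if_neg h']; exact Or.inl ⟨rfl, rfl⟩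
  · intro k hk
    simp only
    rw [if_neg (by omega)]

lemma okf_Y {n : ℕ} (i : Fin (n / 2)) :
    okf (fun k : Fin n =>
      if (k : ℕ) = 2 * (i : ℕ) ∨ (k : ℕ) = 2 * (i : ℕ) + 1 then (2 : Fin 4) else 0) := by
  have hi := i.isLt
  constructor
  · intro j hj
    simp only
    by_cases h' : j = (i : ℕ)
    · subst h'
      rw [if_pos (Or.inl rfl), if_pos (Or.inr rfl)]
      exact Or.inr (Or.inr (Or.inl ⟨rfl, rfl⟩))
    · rw [if_neg (by omega), if_neg (by omega)]
      exact Or.inl ⟨rfl, rfl⟩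
  · intro k hk
    simp only
    rw [if_neg (by omega)]

lemma realMat_X {n : ℕ} (i : Fin (n / 2)) : RealMat (Xhat i) := by
  apply RealMat_pauliWord
  have h : (Finset.univ.filter fun k : Fin n =>
      (if (k : ℕ) = 2 * (i : ℕ) + 1 then (1 : Fin 4) else 0) = 2) = ∅ := by
    apply Finset.filter_eq_empty_iff.mpr
    intro k _
    split_ifs <;> decide
  rw [h]
  simp

lemma realMat_Y {n : ℕ} (i : Fin (n / 2)) : RealMat (Yhat i) := by
  apply RealMat_pauliWord
  have hi := i.isLt
  have h2i : 2 * (i : ℕ) < n := by omega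
  have h2i1 : 2 * (i : ℕ) + 1 < n := by omega
  have h : (Finset.univ.filter fun k : Fin n =>
      (if (k : ℕ) = 2 * (i : ℕ) ∨ (k : ℕ) = 2 * (i : ℕ) + 1 then (2 : Fin 4) else 0) = 2)
      = {⟨2 * (i : ℕ), h2i⟩, ⟨2 * (i : ℕ) + 1, h2i1⟩} := by
    ext k
    simp only [Finset.mem_filter, Finset.mem_univ, true_and, Finset.mem_insert,
      Finset.mem_singleton, Fin.ext_iff]
    split_ifs with hP
    · simp [hP]
    · simpa using hP
  rw [h, Finset.card_insert_of_notMem (by simp [Fin.ext_iff]), Finset.card_singleton]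
  exact even_two

/-- Every nontrivial product of the generators `X̂ᵢ, Ŷⱼ` is (up to sign) a non-diagonal
Pauli word; consequently the unital algebra they generate is quasiorthogonal to the
diagonal algebra `Δ_{2ⁿ}`. -/
theorem stmt18 (n : ℕ) (hn : 1 ≤ n) :
    (∀ m ∈ Submonoid.closure (Set.range (Xhat (n := n)) ∪ Set.range (Yhat (n := n))),
      m ≠ 1 → m ≠ -1 →
        (∃ (c : ℂ) (f : Fin n → Fin 4),
          (c = 1 ∨ c = -1 ∨ c = I ∨ c = -I) ∧ m = c • pauliWord f) ∧ ¬ m.IsDiag) ∧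
    (∀ b ∈ Algebra.adjoin ℂ (Set.range (Xhat (n := n)) ∪ Set.range (Yhat (n := n))),
      ∀ d : Matrix (Fin n → Fin 2) (Fin n → Fin 2) ℂ, d.IsDiag →
        Matrix.trace (d * b) = Matrix.trace d * Matrix.trace b / 2 ^ n) := by
  set S := Set.range (Xhat (n := n)) ∪ Set.range (Yhat (n := n)) with hS
  -- the key invariant
  have key : ∀ m ∈ Submonoid.closure S,
      (∃ c f, unit4 c ∧ okf f ∧ m = c • pauliWord f) ∧ RealMat m := by
    intro m hm
    induction hm using Submonoid.closure_induction with
    | mem x hx =>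
      rcases hx with ⟨i, rfl⟩ | ⟨i, rfl⟩
      · exact ⟨⟨1, _, unit4_one, okf_X i, (one_smul _ _).symm⟩, realMat_X i⟩
      · exact ⟨⟨1, _, unit4_one, okf_Y i, (one_smul _ _).symm⟩, realMat_Y i⟩
    | one =>
      exact ⟨⟨1, fun _ => 0, unit4_one, okf_zero, by rw [pauliWord_zero, one_smul]⟩,
        RealMat.one⟩
    | mul x y hx hy ihx ihy =>
      obtain ⟨⟨c, f, hc, hf, rfl⟩, hrx⟩ := ihx
      obtain ⟨⟨c', g, hc', hg, rfl⟩, hry⟩ := ihy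
      refine ⟨⟨c * c' * ∏ k, ph (f k) (g k), fun k => tbl (f k) (g k),
        unit4_mul (unit4_mul hc hc')
          (Finset.prod_induction _ _ (fun _ _ => unit4_mul) unit4_one
            (fun k _ => unit4_ph _ _)),
        okf_tbl hf hg, ?_⟩, RealMat.mul hrx hry⟩
      rw [smul_mul_smul_comm, pauliWord_mul, smul_smul]
  -- zero traces for nonzero words
  have diag0 : ∀ (f : Fin n → Fin 4), (∃ k, f k = 1 ∨ f k = 2) →
      ∀ i, pauliWord f i i = 0 := by
    intro f ⟨k, hk⟩ i
    exact pauliWord_diag_zero hk i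
  constructor
  · -- first part
    intro m hm h1 hm1
    obtain ⟨⟨c, f, hc, hf, rfl⟩, hre⟩ := key m hm
    have hf0 : f ≠ fun _ => 0 := by
      rintro rfl
      rw [pauliWord_zero] at h1 hm1 hre
      have hcim := hre (fun _ => 0) (fun _ => 0)
      simp only [Matrix.smul_apply, Matrix.one_apply_eq, smul_eq_mul, mul_one] at hcim
      rcases hc with rfl|rfl|rfl|rfl
      · exact h1 (one_smul _ _)
      · exact hm1 (by rw [neg_smul, one_smul])
      · simp [Complex.I_im] at hcim
      · simp [Complex.I_im] at hcim
    obtain ⟨k, hk⟩ := okf_exists hf hf0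
    refine ⟨⟨c, f, hc, rfl⟩, ?_⟩
    intro hdiag
    have hxy : (fun _ : Fin n => (0 : Fin 2))
        ≠ (fun k' => if f k' = 1 ∨ f k' = 2 then 1 else 0) := by
      intro hcontra
      have := congrFun hcontra k
      rw [if_pos hk] at this
      exact absurd this (by decide)
    have hz : (c • pauliWord f) (fun _ => 0)
        (fun k' => if f k' = 1 ∨ f k' = 2 then 1 else 0) = 0 := hdiag hxy
    have hnz : pauliWord f (fun _ => 0) (fun k' => if f k' = 1 ∨ f k' = 2 then 1 else 0)
        ≠ 0 := by
      show (∏ k', pauli (f k') _ _) ≠ 0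
      rw [Finset.prod_ne_zero_iff]
      intro k' _
      have hgen : ∀ a : Fin 4, pauli a 0 (if a = 1 ∨ a = 2 then 1 else 0) ≠ 0 := by
        intro a
        fin_cases a <;>
          first
            | (rw [if_pos (by decide)];
               norm_num [pauli, Matrix.one_apply, Matrix.vecHead, Matrix.vecTail,
                 Complex.I_ne_zero])
            | (rw [if_neg (by decide)];
               norm_num [pauli, Matrix.one_apply, Matrix.vecHead, Matrix.vecTail])
      exact hgen (f k')
    rw [Matrix.smul_apply, smul_eq_mul] at hz
    rcases mul_eq_zero.mp hz with h | h
    · exact unit4_ne_zero hc h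
    · exact hnz h
  · -- second part
    intro b hb d hd
    have hb' : b ∈ Submodule.span ℂ ((Submonoid.closure S : Submonoid _) : Set _) := by
      rw [← Algebra.adjoin_eq_span]
      exact hb
    clear hb
    have h2n : (2 : ℂ) ^ n ≠ 0 := pow_ne_zero _ two_ne_zero
    induction hb' using Submodule.span_induction with
    | mem m hm =>
      obtain ⟨⟨c, f, hc, hf, rfl⟩, -⟩ := key m hm
      by_cases hf0 : f = fun _ => 0
      · subst hf0
        rw [pauliWord_zero]
        rw [Matrix.mul_smul, mul_one, Matrix.trace_smul, Matrix.trace_smul,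
          Matrix.trace_one, smul_eq_mul, smul_eq_mul]
        have hcard : (Fintype.card (Fin n → Fin 2) : ℂ) = 2 ^ n := by
          rw [Fintype.card_fun]
          push_cast
          simp
        rw [hcard]
        field_simp
      · obtain ⟨k, hk⟩ := okf_exists hf hf0
        have htr : Matrix.trace (c • pauliWord f) = 0 := by
          rw [Matrix.trace_smul, Matrix.trace]
          have : ∑ i, (pauliWord f).diag i = 0 :=
            Finset.sum_eq_zero fun i _ => diag0 f ⟨k, hk⟩ i
          rw [this, smul_zero]
        have htr2 : Matrix.trace (d * (c • pauliWord f)) = 0 := by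
          rw [Matrix.trace]
          refine Finset.sum_eq_zero fun i _ => ?_
          show (d * (c • pauliWord f)) i i = 0
          rw [Matrix.mul_apply]
          refine Finset.sum_eq_zero fun x _ => ?_
          by_cases hxi : i = x
          · subst hxi
            rw [Matrix.smul_apply, diag0 f ⟨k, hk⟩ i, smul_zero, mul_zero]
          · rw [hd hxi, zero_mul]
        rw [htr, htr2, mul_zero, zero_div]
    | zero => simp
    | add x y hx hy ihx ihy =>
      rw [mul_add, Matrix.trace_add, Matrix.trace_add, ihx, ihy]
      ring
    | smul a x hx ihx =>
      rw [Matrix.mul_smul, Matrix.trace_smul, Matrix.trace_smul, ihx, smul_eq_mul,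
        smul_eq_mul]
      ring
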